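/- arXiv:1312.6194 — 2 statements merged into one kernel-verified Lean document; each statement's English description precedes it below -/
import Mathlib

section
/- Let v₁, v₂ be vectors in a finite-dimensional Euclidean space and set Wᵢ = √(1 + ‖vᵢ‖²). Then ⟨v₁ - v₂, v₁/W₁ - v₂/W₂⟩ = ((W₁ + W₂)/2) · ( ‖v₁/W₁ - v₂/W₂‖² + (1/W₁ - 1/W₂)² ). -/
/-! Put `s = 1 / W(v)` and `u = s • v`; then `‖u‖² + s² = 1`, i.e. `(u, s)` lies on the unit sphere
of `E × ℝ`, and `v = s⁻¹ • u`. For two points `p₁, p₂` of the unit sphere,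
`‖p₁ - p₂‖² = 2 (1 - ⟪p₁, p₂⟫)`, while expanding `⟪s₁⁻¹ • u₁ - s₂⁻¹ • u₂, u₁ - u₂⟫` with
`‖uᵢ‖² = 1 - sᵢ²` gives `(s₁⁻¹ + s₂⁻¹) (1 - ⟪p₁, p₂⟫)`. -/

open RealInnerProductSpace

section

variable {E : Type*} [NormedAddCommGroup E] [InnerProductSpace ℝ E]

theorem inner_inv_smul_sub_inv_smul_of_norm_sq_add_sq_eq_one {u₁ u₂ : E} {s₁ s₂ : ℝ}
    (h₁ : ‖u₁‖ ^ 2 + s₁ ^ 2 = 1) (h₂ : ‖u₂‖ ^ 2 + s₂ ^ 2 = 1) (hs₁ : s₁ ≠ 0) (hs₂ : s₂ ≠ 0) :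
    ⟪s₁⁻¹ • u₁ - s₂⁻¹ • u₂, u₁ - u₂⟫ = (s₁⁻¹ + s₂⁻¹) / 2 * (‖u₁ - u₂‖ ^ 2 + (s₁ - s₂) ^ 2) := by
  rw [norm_sub_sq_real]
  simp only [inner_sub_left, inner_sub_right, real_inner_smul_left, real_inner_self_eq_norm_sq,
    real_inner_comm u₁ u₂]
  rw [show ‖u₁‖ ^ 2 = 1 - s₁ ^ 2 by linarith, show ‖u₂‖ ^ 2 = 1 - s₂ ^ 2 by linarith]
  field_simp
  ring

theorem norm_smul_sq_add_sq_eq_one (v : E) :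
    ‖(1 / √(1 + ‖v‖ ^ 2)) • v‖ ^ 2 + (1 / √(1 + ‖v‖ ^ 2)) ^ 2 = 1 := by
  have hW : √(1 + ‖v‖ ^ 2) ^ 2 = 1 + ‖v‖ ^ 2 := Real.sq_sqrt (by positivity)
  rw [norm_smul, mul_pow, Real.norm_eq_abs, sq_abs, div_pow, hW]
  field_simp
  ring

end

theorem stmt_0_general {E : Type*} [NormedAddCommGroup E] [InnerProductSpace ℝ E]
    (v₁ v₂ : E) :
    ⟪v₁ - v₂, (1 / Real.sqrt (1 + ‖v₁‖ ^ 2)) • v₁ - (1 / Real.sqrt (1 + ‖v₂‖ ^ 2)) • v₂⟫ =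
      ((Real.sqrt (1 + ‖v₁‖ ^ 2) + Real.sqrt (1 + ‖v₂‖ ^ 2)) / 2) *
        (‖(1 / Real.sqrt (1 + ‖v₁‖ ^ 2)) • v₁ - (1 / Real.sqrt (1 + ‖v₂‖ ^ 2)) • v₂‖ ^ 2 +
          (1 / Real.sqrt (1 + ‖v₁‖ ^ 2) - 1 / Real.sqrt (1 + ‖v₂‖ ^ 2)) ^ 2) := by
  have hs₁ : 1 / √(1 + ‖v₁‖ ^ 2) ≠ 0 := by positivity
  have hs₂ : 1 / √(1 + ‖v₂‖ ^ 2) ≠ 0 := by positivity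
  have key := inner_inv_smul_sub_inv_smul_of_norm_sq_add_sq_eq_one
    (norm_smul_sq_add_sq_eq_one v₁) (norm_smul_sq_add_sq_eq_one v₂) hs₁ hs₂
  rw [inv_smul_smul₀ hs₁, inv_smul_smul₀ hs₂] at key
  simpa only [one_div, inv_inv] using key

theorem stmt_0 {E : Type*} [NormedAddCommGroup E] [InnerProductSpace ℝ E]
    [FiniteDimensional ℝ E] (v₁ v₂ : E) :
    ⟪v₁ - v₂, (1 / Real.sqrt (1 + ‖v₁‖ ^ 2)) • v₁ - (1 / Real.sqrt (1 + ‖v₂‖ ^ 2)) • v₂⟫ =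
      ((Real.sqrt (1 + ‖v₁‖ ^ 2) + Real.sqrt (1 + ‖v₂‖ ^ 2)) / 2) *
        (‖(1 / Real.sqrt (1 + ‖v₁‖ ^ 2)) • v₁ - (1 / Real.sqrt (1 + ‖v₂‖ ^ 2)) • v₂‖ ^ 2 +
          (1 / Real.sqrt (1 + ‖v₁‖ ^ 2) - 1 / Real.sqrt (1 + ‖v₂‖ ^ 2)) ^ 2) :=
  stmt_0_general v₁ v₂
end

section
/- Let v₁, v₂ be vectors in a finite-dimensional Euclidean space and set Wᵢ = √(1 + ‖vᵢ‖²). Then ⟨v₁ - v₂, v₁/W₁ - v₂/W₂⟩ ≥ ‖v₁/W₁ - v₂/W₂‖², and in particular ⟨v₁ - v₂, v₁/W₁ - v₂/W₂⟩ ≥ 0 with equality if and only if v₁ = v₂. -/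
/-!
Write `u = v / W(v)`, so that `v = W(v) • u`. Then
`⟪v₁ - v₂, u₁ - u₂⟫ - ‖u₁ - u₂‖² = ⟪(W₁ - 1) • u₁ - (W₂ - 1) • u₂, u₁ - u₂⟫`,
and by Cauchy–Schwarz this is at least `(‖u₁‖ - ‖u₂‖) ((W₁ - 1) ‖u₁‖ - (W₂ - 1) ‖u₂‖)`, which is
nonnegative because `‖u‖² = 1 - W⁻²` and `W - 1` are both increasing functions of `W`.
Equality forces `u₁ = u₂`, hence `W₁ = W₂` and `v₁ = v₂`.
-/

open RealInnerProductSpace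

theorem inner_smul_sub_smul_sub_nonneg {E : Type*} [NormedAddCommGroup E]
    [InnerProductSpace ℝ E] {a b : ℝ} {x y : E} (ha : 0 ≤ a) (hb : 0 ≤ b)
    (h : 0 ≤ (‖x‖ - ‖y‖) * (a - b)) : 0 ≤ ⟪a • x - b • y, x - y⟫ := by
  have hxy : ⟪x, y⟫ ≤ ‖x‖ * ‖y‖ := real_inner_le_norm x y
  have hexpand : ⟪a • x - b • y, x - y⟫ = a * ‖x‖ ^ 2 + b * ‖y‖ ^ 2 - (a + b) * ⟪x, y⟫ := by
    simp only [inner_sub_left, inner_sub_right, real_inner_smul_left, real_inner_self_eq_norm_sq,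
      real_inner_comm x y]
    ring
  rw [hexpand]
  nlinarith [mul_le_mul_of_nonneg_left hxy (add_nonneg ha hb), norm_nonneg y,
    mul_nonneg ha (sq_nonneg (‖x‖ - ‖y‖)), mul_nonneg (norm_nonneg y) h]

section RelativisticVelocity

variable {E : Type*} [NormedAddCommGroup E]

noncomputable def lorentzFactor (v : E) : ℝ := √(1 + ‖v‖ ^ 2)

theorem lorentzFactor_sq (v : E) : lorentzFactor v ^ 2 = 1 + ‖v‖ ^ 2 :=
  Real.sq_sqrt (by positivity)

theorem one_le_lorentzFactor (v : E) : 1 ≤ lorentzFactor v :=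
  Real.one_le_sqrt.2 (le_add_of_nonneg_right (by positivity))

theorem lorentzFactor_pos (v : E) : 0 < lorentzFactor v :=
  one_pos.trans_le (one_le_lorentzFactor v)

variable [NormedSpace ℝ E]

noncomputable def relativisticVelocity (v : E) : E := (1 / lorentzFactor v) • v

theorem lorentzFactor_smul_relativisticVelocity (v : E) :
    lorentzFactor v • relativisticVelocity v = v := by
  rw [relativisticVelocity, smul_smul, mul_one_div_cancel (lorentzFactor_pos v).ne', one_smul]

theorem norm_relativisticVelocity_sq (v : E) :
    ‖relativisticVelocity v‖ ^ 2 = 1 - 1 / lorentzFactor v ^ 2 := by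
  have hW := (lorentzFactor_pos v).ne'
  rw [relativisticVelocity, norm_smul, mul_pow, Real.norm_eq_abs, sq_abs, div_pow,
    eq_sub_of_add_eq' (lorentzFactor_sq v).symm]
  field_simp

theorem norm_relativisticVelocity_le_of_lorentzFactor_le {v w : E}
    (h : lorentzFactor v ≤ lorentzFactor w) :
    ‖relativisticVelocity v‖ ≤ ‖relativisticVelocity w‖ := by
  have hsq : ‖relativisticVelocity v‖ ^ 2 ≤ ‖relativisticVelocity w‖ ^ 2 := by
    rw [norm_relativisticVelocity_sq, norm_relativisticVelocity_sq]
    have hpos := lorentzFactor_pos v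
    gcongr
  exact (pow_le_pow_iff_left₀ (norm_nonneg _) (norm_nonneg _) two_ne_zero).1 hsq

theorem norm_relativisticVelocity_sub_mul_lorentzFactor_sub_nonneg (v w : E) :
    0 ≤ (‖relativisticVelocity v‖ - ‖relativisticVelocity w‖) *
      (lorentzFactor v - lorentzFactor w) := by
  rcases le_total (lorentzFactor v) (lorentzFactor w) with h | h
  · exact mul_nonneg_of_nonpos_of_nonpos
      (sub_nonpos.2 (norm_relativisticVelocity_le_of_lorentzFactor_le h)) (sub_nonpos.2 h)
  · exact mul_nonneg
      (sub_nonneg.2 (norm_relativisticVelocity_le_of_lorentzFactor_le h)) (sub_nonneg.2 h)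

theorem relativisticVelocity_injective :
    Function.Injective (relativisticVelocity : E → E) := by
  intro v w h
  have hsq : lorentzFactor v ^ 2 = lorentzFactor w ^ 2 := by
    have hnorm := congrArg (‖·‖ ^ 2) h
    simp only [norm_relativisticVelocity_sq, sub_right_inj, one_div, inv_inj] at hnorm
    exact hnorm
  have hW : lorentzFactor v = lorentzFactor w :=
    (pow_left_inj₀ (lorentzFactor_pos v).le (lorentzFactor_pos w).le two_ne_zero).1 hsq
  rw [← lorentzFactor_smul_relativisticVelocity v, ← lorentzFactor_smul_relativisticVelocity w,
    h, hW]

end RelativisticVelocity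

theorem norm_relativisticVelocity_sub_sq_le_inner {E : Type*} [NormedAddCommGroup E]
    [InnerProductSpace ℝ E] (v w : E) :
    ‖relativisticVelocity v - relativisticVelocity w‖ ^ 2 ≤
      ⟪v - w, relativisticVelocity v - relativisticVelocity w⟫ := by
  set u := relativisticVelocity v
  set u' := relativisticVelocity w
  have hsplit : v - w = ((lorentzFactor v - 1) • u - (lorentzFactor w - 1) • u') + (u - u') := by
    rw [sub_smul, sub_smul, one_smul, one_smul, lorentzFactor_smul_relativisticVelocity,
      lorentzFactor_smul_relativisticVelocity]
    abel
  have hgap : 0 ≤ ⟪(lorentzFactor v - 1) • u - (lorentzFactor w - 1) • u', u - u'⟫ :=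
    inner_smul_sub_smul_sub_nonneg (sub_nonneg.2 (one_le_lorentzFactor v))
      (sub_nonneg.2 (one_le_lorentzFactor w))
      (by simpa using norm_relativisticVelocity_sub_mul_lorentzFactor_sub_nonneg v w)
  rw [hsplit, inner_add_left, real_inner_self_eq_norm_sq]
  linarith

theorem stmt_1_general {E : Type*} [NormedAddCommGroup E] [InnerProductSpace ℝ E]
    (v₁ v₂ : E) :
    ⟪v₁ - v₂, (1 / Real.sqrt (1 + ‖v₁‖ ^ 2)) • v₁ - (1 / Real.sqrt (1 + ‖v₂‖ ^ 2)) • v₂⟫ ≥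
        ‖(1 / Real.sqrt (1 + ‖v₁‖ ^ 2)) • v₁ - (1 / Real.sqrt (1 + ‖v₂‖ ^ 2)) • v₂‖ ^ 2 ∧
      ⟪v₁ - v₂, (1 / Real.sqrt (1 + ‖v₁‖ ^ 2)) • v₁ - (1 / Real.sqrt (1 + ‖v₂‖ ^ 2)) • v₂⟫ ≥ 0 ∧
      (⟪v₁ - v₂, (1 / Real.sqrt (1 + ‖v₁‖ ^ 2)) • v₁ - (1 / Real.sqrt (1 + ‖v₂‖ ^ 2)) • v₂⟫ = 0 ↔
        v₁ = v₂) := by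
  change ⟪v₁ - v₂, relativisticVelocity v₁ - relativisticVelocity v₂⟫ ≥
      ‖relativisticVelocity v₁ - relativisticVelocity v₂‖ ^ 2 ∧
    ⟪v₁ - v₂, relativisticVelocity v₁ - relativisticVelocity v₂⟫ ≥ 0 ∧
    (⟪v₁ - v₂, relativisticVelocity v₁ - relativisticVelocity v₂⟫ = 0 ↔ v₁ = v₂)
  have hmain := norm_relativisticVelocity_sub_sq_le_inner v₁ v₂
  refine ⟨hmain, (sq_nonneg _).trans hmain, fun h0 => ?_,
    fun h => by rw [h, sub_self, inner_zero_left]⟩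
  have hnorm : ‖relativisticVelocity v₁ - relativisticVelocity v₂‖ ^ 2 = 0 :=
    le_antisymm (h0 ▸ hmain) (sq_nonneg _)
  rw [sq_eq_zero_iff, norm_eq_zero, sub_eq_zero] at hnorm
  exact relativisticVelocity_injective hnorm

theorem stmt_1 {E : Type*} [NormedAddCommGroup E] [InnerProductSpace ℝ E]
    [FiniteDimensional ℝ E] (v₁ v₂ : E) :
    ⟪v₁ - v₂, (1 / Real.sqrt (1 + ‖v₁‖ ^ 2)) • v₁ - (1 / Real.sqrt (1 + ‖v₂‖ ^ 2)) • v₂⟫ ≥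
        ‖(1 / Real.sqrt (1 + ‖v₁‖ ^ 2)) • v₁ - (1 / Real.sqrt (1 + ‖v₂‖ ^ 2)) • v₂‖ ^ 2 ∧
      ⟪v₁ - v₂, (1 / Real.sqrt (1 + ‖v₁‖ ^ 2)) • v₁ - (1 / Real.sqrt (1 + ‖v₂‖ ^ 2)) • v₂⟫ ≥ 0 ∧
      (⟪v₁ - v₂, (1 / Real.sqrt (1 + ‖v₁‖ ^ 2)) • v₁ - (1 / Real.sqrt (1 + ‖v₂‖ ^ 2)) • v₂⟫ = 0 ↔
        v₁ = v₂) :=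
  stmt_1_general v₁ v₂
end
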